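/- For every k ≥ 2 and n ≥ 0, if π and σ both belong to F^k_n(132) and their root values agree, i.e. π((k+1)i+1) = σ((k+1)i+1) for all 0 ≤ i < n, then π = σ. In other words, a 132-avoiding k-ary shrub forest is uniquely determined by its root labels. -/

import Mathlib

/-!
Compare `π` and `σ` position by position from the left and let `p` be the first position where
they differ, say `π p < σ p`. Since the roots agree, `p` is a leaf, and its root `r < p` satisfies
`σ r = π r < π p`. The value `π p` does not occur in `σ` before `p`, so it sits at some `q > p`,
and then `σ r < σ q < σ p` with `r < p < q` is an occurrence of `132` in `σ`.
-/

/-- `π` contains the pattern `ρ`. -/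
def Contains {m k : ℕ} (π : Equiv.Perm (Fin m)) (ρ : Fin k → Fin k) : Prop :=
  ∃ f : Fin k → Fin m, StrictMono f ∧ ∀ a b : Fin k, π (f a) < π (f b) ↔ ρ a < ρ b

/-- `π` avoids the pattern `ρ`. -/
def Avoids {m k : ℕ} (π : Equiv.Perm (Fin m)) (ρ : Fin k → Fin k) : Prop :=
  ¬ Contains π ρ

lemma leaf_lt {k n i j : ℕ} (hi : i < n) (hj : j ≤ k) : (k+1)*i + j < (k+1)*n := by
  have h1 : (k+1)*(i+1) ≤ (k+1)*n := Nat.mul_le_mul (le_refl (k+1)) hi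
  have h2 : (k+1)*(i+1) = (k+1)*i + (k+1) := by ring
  omega

lemma root_lt {k n i : ℕ} (hi : i < n) : (k+1)*i < (k+1)*n := leaf_lt (j := 0) hi (Nat.zero_le k)

/-- The defining property of (the permutation associated to) a `k`-ary shrub forest of `n`
shrubs: on each block of `k+1` consecutive positions, the first entry (the root) is smaller
than each of the following `k` entries (the leaves).  (Positions are 0-indexed.) -/
def IsKShrubForest (k n : ℕ) (π : Equiv.Perm (Fin ((k+1)*n))) : Prop :=
  ∀ i j : ℕ, (hi : i < n) → (hj1 : 1 ≤ j) → (hj2 : j ≤ k) →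
    π ⟨(k+1)*i, root_lt hi⟩ < π ⟨(k+1)*i + j, leaf_lt hi hj2⟩

def rootPos (k : ℕ) {n i : ℕ} (hi : i < n) : Fin ((k+1)*n) := ⟨(k+1)*i, root_lt hi⟩

theorem contains_132_of_lt {m : ℕ} (π : Equiv.Perm (Fin m)) {a b c : Fin m}
    (hab : a < b) (hbc : b < c) (hac : π a < π c) (hcb : π c < π b) :
    Contains π ![0, 2, 1] := by
  refine ⟨![a, b, c], ?_, ?_⟩
  · rw [Fin.strictMono_iff_lt_succ]
    intro i
    fin_cases i <;> assumption
  · intro x y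
    fin_cases x <;> fin_cases y <;> simp <;> order

theorem IsKShrubForest.eq_rootPos_or_exists_rootPos_lt {k n : ℕ}
    {π : Equiv.Perm (Fin ((k+1)*n))} (hπ : IsKShrubForest k n π) (p : Fin ((k+1)*n)) :
    (∃ i, ∃ hi : i < n, p = rootPos k hi) ∨
      ∃ i, ∃ hi : i < n, rootPos k hi < p ∧ π (rootPos k hi) < π p := by
  have hi : p.val / (k+1) < n := Nat.div_lt_of_lt_mul p.isLt
  have hp : (k+1) * (p.val / (k+1)) + p.val % (k+1) = p.val := Nat.div_add_mod _ _
  have hj : p.val % (k+1) < k+1 := Nat.mod_lt _ k.succ_pos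
  by_cases hroot : p.val % (k+1) = 0
  · exact Or.inl ⟨_, hi, Fin.ext (by simp only [rootPos]; omega)⟩
  · have hleaf := hπ _ (p.val % (k+1)) hi (by omega) (by omega)
    simp only [hp] at hleaf
    exact Or.inr ⟨_, hi, Fin.mk_lt_mk.mpr (by omega), hleaf⟩

theorem lt_symm_apply_of_agree_below {α : Type*} [LinearOrder α] {π σ : Equiv.Perm α} {p : α}
    (hagree : ∀ q < p, π q = σ q) (hne : π p ≠ σ p) : p < σ.symm (π p) := by
  rcases lt_trichotomy (σ.symm (π p)) p with hlt | heq | hgt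
  · have := hagree _ hlt
    rw [σ.apply_symm_apply] at this
    exact absurd (π.injective this) hlt.ne
  · exact absurd (σ.symm_apply_eq.mp heq) hne
  · exact hgt

theorem not_lt_of_agree_below {k n : ℕ} {π σ : Equiv.Perm (Fin ((k+1)*n))}
    (hπ : IsKShrubForest k n π) (hσ : Avoids σ ![0, 2, 1])
    (hroots : ∀ i, ∀ hi : i < n, π (rootPos k hi) = σ (rootPos k hi))
    {p : Fin ((k+1)*n)} (hagree : ∀ q < p, π q = σ q) : ¬ π p < σ p := by
  intro hlt
  rcases hπ.eq_rootPos_or_exists_rootPos_lt p with ⟨i, hi, rfl⟩ | ⟨i, hi, hrp, hrπ⟩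
  · exact hlt.ne (hroots i hi)
  · have hpq := lt_symm_apply_of_agree_below hagree hlt.ne
    refine hσ (contains_132_of_lt σ hrp hpq ?_ ?_)
    · rwa [σ.apply_symm_apply, ← hroots]
    · rwa [σ.apply_symm_apply]

theorem av132_determined_by_roots_general (k n : ℕ)
    (π σ : Equiv.Perm (Fin ((k+1)*n)))
    (hπ : IsKShrubForest k n π) (hσ : IsKShrubForest k n σ)
    (hπav : Avoids π (![0, 2, 1] : Fin 3 → Fin 3))
    (hσav : Avoids σ (![0, 2, 1] : Fin 3 → Fin 3))
    (hroots : ∀ i : ℕ, (hi : i < n) → π ⟨(k+1)*i, root_lt hi⟩ = σ ⟨(k+1)*i, root_lt hi⟩) :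
    π = σ := by
  ext1 p
  induction p using WellFoundedLT.induction with
  | _ p ih =>
    rcases lt_trichotomy (π p) (σ p) with hlt | heq | hgt
    · exact absurd hlt (not_lt_of_agree_below hπ hσav hroots ih)
    · exact heq
    · exact absurd hgt (not_lt_of_agree_below hσ hπav (fun i hi => (hroots i hi).symm)
        fun q hq => (ih q hq).symm)

/-- A 132-avoiding `k`-ary shrub forest is uniquely determined by its root labels. -/
theorem av132_determined_by_roots (k n : ℕ) (hk : 2 ≤ k)
    (π σ : Equiv.Perm (Fin ((k+1)*n)))
    (hπ : IsKShrubForest k n π) (hσ : IsKShrubForest k n σ)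
    (hπav : Avoids π (![0, 2, 1] : Fin 3 → Fin 3))
    (hσav : Avoids σ (![0, 2, 1] : Fin 3 → Fin 3))
    (hroots : ∀ i : ℕ, (hi : i < n) → π ⟨(k+1)*i, root_lt hi⟩ = σ ⟨(k+1)*i, root_lt hi⟩) :
    π = σ :=
  av132_determined_by_roots_general k n π σ hπ hσ hπav hσav hroots
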